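/- arXiv:1909.07681 — 3 statements merged into one kernel-verified Lean document; each statement's English description precedes it below -/
import Mathlib

section
/- Let E and F be Banach lattices and let T : E → F be a surjective continuous lattice homomorphism. Then T is σ-uaw-continuous: for every norm-bounded uaw-null sequence (x_n) in E, the sequence (T x_n) is uaw-null in F. -/
open Filter Topology

/-- A sequence in a Banach lattice is uaw-null if `|x n| ⊓ u` converges weakly to `0`
for every `u ≥ 0`. -/
def UawNullSeq {E : Type*} [NormedAddCommGroup E] [Lattice E] [IsOrderedAddMonoid E] [HasSolidNorm E] [NormedSpace ℝ E]
    (x : ℕ → E) : Prop :=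
  ∀ u : E, 0 ≤ u → ∀ f : E →L[ℝ] ℝ,
    Tendsto (fun n => f (|x n| ⊓ u)) atTop (𝓝 0)

/-- A sequence in a Banach lattice is un-null if `‖|y n| ⊓ v‖ → 0` for every `v ≥ 0`. -/
def UnNullSeq {F : Type*} [NormedAddCommGroup F] [Lattice F] [IsOrderedAddMonoid F] [HasSolidNorm F] [NormedSpace ℝ F]
    (y : ℕ → F) : Prop :=
  ∀ v : F, 0 ≤ v → Tendsto (fun n => ‖|y n| ⊓ v‖) atTop (𝓝 0)

/-- A sequence is weakly null if `f (x n) → 0` for every continuous linear functional `f`. -/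
def WeaklyNullSeq {E : Type*} [NormedAddCommGroup E] [NormedSpace ℝ E]
    (x : ℕ → E) : Prop :=
  ∀ f : E →L[ℝ] ℝ, Tendsto (fun n => f (x n)) atTop (𝓝 0)

/-- σ-unbounded Dunford-Pettis operator. -/
def SigmaUDP {E F : Type*} [NormedAddCommGroup E] [Lattice E] [IsOrderedAddMonoid E] [HasSolidNorm E] [NormedSpace ℝ E]
    [NormedAddCommGroup F] [Lattice F] [IsOrderedAddMonoid F] [HasSolidNorm F] [NormedSpace ℝ F] (T : E →L[ℝ] F) : Prop :=
  ∀ x : ℕ → E, (∃ C : ℝ, ∀ n, ‖x n‖ ≤ C) → UawNullSeq x → UnNullSeq fun n => T (x n)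

/-- Dunford-Pettis operator: maps weakly null sequences to norm null sequences. -/
def DunfordPettis {E F : Type*} [NormedAddCommGroup E] [NormedSpace ℝ E]
    [NormedAddCommGroup F] [NormedSpace ℝ F] (T : E →L[ℝ] F) : Prop :=
  ∀ x : ℕ → E, WeaklyNullSeq x → Tendsto (fun n => ‖T (x n)‖) atTop (𝓝 0)

/-- A net (indexed by a directed preorder) is uaw-null. -/
def UawNullNet {E : Type*} [NormedAddCommGroup E] [Lattice E] [IsOrderedAddMonoid E] [HasSolidNorm E] [NormedSpace ℝ E]
    {ι : Type} [Preorder ι] (x : ι → E) : Prop :=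
  ∀ u : E, 0 ≤ u → ∀ f : E →L[ℝ] ℝ,
    Tendsto (fun i => f (|x i| ⊓ u)) atTop (𝓝 0)

/-- A net (indexed by a directed preorder) is un-null. -/
def UnNullNet {F : Type*} [NormedAddCommGroup F] [Lattice F] [IsOrderedAddMonoid F] [HasSolidNorm F] [NormedSpace ℝ F]
    {ι : Type} [Preorder ι] (y : ι → F) : Prop :=
  ∀ v : F, 0 ≤ v → Tendsto (fun i => ‖|y i| ⊓ v‖) atTop (𝓝 0)

/-- Unbounded Dunford-Pettis operator: maps norm bounded uaw-null nets to un-null nets. -/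
def UDP {E F : Type*} [NormedAddCommGroup E] [Lattice E] [IsOrderedAddMonoid E] [HasSolidNorm E] [NormedSpace ℝ E]
    [NormedAddCommGroup F] [Lattice F] [IsOrderedAddMonoid F] [HasSolidNorm F] [NormedSpace ℝ F] (T : E →L[ℝ] F) : Prop :=
  ∀ (ι : Type) [Preorder ι] [IsDirected ι (· ≤ ·)] [Nonempty ι] (x : ι → E),
    (∃ C : ℝ, ∀ i, ‖x i‖ ≤ C) → UawNullNet x → UnNullNet fun i => T (x i)

/-- uaw-continuous operator: maps norm bounded uaw-null nets to uaw-null nets. -/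
def UawContinuous {E F : Type*} [NormedAddCommGroup E] [Lattice E] [IsOrderedAddMonoid E] [HasSolidNorm E] [NormedSpace ℝ E]
    [NormedAddCommGroup F] [Lattice F] [IsOrderedAddMonoid F] [HasSolidNorm F] [NormedSpace ℝ F] (T : E →L[ℝ] F) : Prop :=
  ∀ (ι : Type) [Preorder ι] [IsDirected ι (· ≤ ·)] [Nonempty ι] (x : ι → E),
    (∃ C : ℝ, ∀ i, ‖x i‖ ≤ C) → UawNullNet x → UawNullNet fun i => T (x i)

/-- A Banach lattice has order continuous norm if every decreasing net with infimum `0`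
converges to `0` in norm. -/
def OrderContinuousNorm (E : Type*) [NormedAddCommGroup E] [Lattice E] [IsOrderedAddMonoid E] [HasSolidNorm E] : Prop :=
  ∀ (ι : Type) [Preorder ι] [IsDirected ι (· ≤ ·)] [Nonempty ι] (x : ι → E),
    Antitone x → IsGLB (Set.range x) 0 → Tendsto (fun i => ‖x i‖) atTop (𝓝 0)

/-- The norm dual of `E` has order continuous norm. -/
def DualOrderContinuousNorm (E : Type*) [NormedAddCommGroup E] [Lattice E] [IsOrderedAddMonoid E] [HasSolidNorm E] [NormedSpace ℝ E] :
    Prop :=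
  ∀ (ι : Type) [Preorder ι] [IsDirected ι (· ≤ ·)] [Nonempty ι] (f : ι → E →L[ℝ] ℝ),
    (∀ i, ∀ x : E, 0 ≤ x → 0 ≤ f i x) →
    (∀ i j, i ≤ j → ∀ x : E, 0 ≤ x → f j x ≤ f i x) →
    (∀ x : E, 0 ≤ x → IsGLB (Set.range fun i => f i x) 0) →
    Tendsto (fun i => ‖f i‖) atTop (𝓝 0)

/-- Strong order unit. -/
def HasStrongOrderUnit (F : Type*) [NormedAddCommGroup F] [Lattice F] [IsOrderedAddMonoid F] [HasSolidNorm F] : Prop :=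
  ∃ e : F, 0 ≤ e ∧ ∀ y : F, ∃ n : ℕ, |y| ≤ n • e

/-- AM-space. -/
def IsAMSpace (E : Type*) [NormedAddCommGroup E] [Lattice E] [IsOrderedAddMonoid E] [HasSolidNorm E] : Prop :=
  ∀ x y : E, 0 ≤ x → 0 ≤ y → ‖x ⊔ y‖ = max ‖x‖ ‖y‖

/-- An atom of a Banach lattice. -/
def IsLatticeAtom {E : Type*} [NormedAddCommGroup E] [Lattice E] [IsOrderedAddMonoid E] [HasSolidNorm E] [NormedSpace ℝ E] (a : E) :
    Prop :=
  0 < a ∧ ∀ x : E, 0 ≤ x → x ≤ a → ∃ c : ℝ, x = c • a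

/-- An atomic Banach lattice: below every `x > 0` there is an atom. -/
def IsAtomicLattice (E : Type*) [NormedAddCommGroup E] [Lattice E] [IsOrderedAddMonoid E] [HasSolidNorm E] [NormedSpace ℝ E] : Prop :=
  ∀ x : E, 0 < x → ∃ a : E, IsLatticeAtom a ∧ a ≤ x

/-- Relatively sequentially un-compact set. -/
def RelSeqUnCompact {F : Type*} [NormedAddCommGroup F] [Lattice F] [IsOrderedAddMonoid F] [HasSolidNorm F] [NormedSpace ℝ F]
    (A : Set F) : Prop :=
  ∀ y : ℕ → F, (∀ n, y n ∈ A) →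
    ∃ (z : F) (φ : ℕ → ℕ), StrictMono φ ∧
      ∀ v : F, 0 ≤ v → Tendsto (fun k => ‖|y (φ k) - z| ⊓ v‖) atTop (𝓝 0)

/-- Sequentially un-compact operator. -/
def SeqUnCompactOp {E F : Type*} [NormedAddCommGroup E] [Lattice E] [IsOrderedAddMonoid E] [HasSolidNorm E] [NormedSpace ℝ E]
    [NormedAddCommGroup F] [Lattice F] [IsOrderedAddMonoid F] [HasSolidNorm F] [NormedSpace ℝ F] (S : E →L[ℝ] F) : Prop :=
  RelSeqUnCompact (S '' Metric.closedBall 0 1)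

/-- M-weakly compact operator. -/
def MWeaklyCompact {E F : Type*} [NormedAddCommGroup E] [Lattice E] [IsOrderedAddMonoid E] [HasSolidNorm E] [NormedSpace ℝ E]
    [NormedAddCommGroup F] [NormedSpace ℝ F] (T : E →L[ℝ] F) : Prop :=
  ∀ x : ℕ → E, (∃ C : ℝ, ∀ n, ‖x n‖ ≤ C) →
    (∀ i j, i ≠ j → |x i| ⊓ |x j| = 0) →
    Tendsto (fun n => ‖T (x n)‖) atTop (𝓝 0)

/-- L-weakly compact operator. -/
def LWeaklyCompact {E F : Type*} [NormedAddCommGroup E] [NormedSpace ℝ E]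
    [NormedAddCommGroup F] [Lattice F] [IsOrderedAddMonoid F] [HasSolidNorm F] [NormedSpace ℝ F] (T : E →L[ℝ] F) : Prop :=
  ∀ y : ℕ → F, (∀ n, ∃ a ∈ T '' Metric.closedBall 0 1, |y n| ≤ |a|) →
    (∀ i j, i ≠ j → |y i| ⊓ |y j| = 0) →
    Tendsto (fun n => ‖y n‖) atTop (𝓝 0)

/-- Relatively weakly compact subset of a normed space. -/
def RelWeaklyCompact {F : Type*} [NormedAddCommGroup F] [NormedSpace ℝ F] (S : Set F) :
    Prop :=
  IsCompact (closure ((toWeakSpace ℝ F) '' S))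

/-- weak Dunford-Pettis operator. -/
def WeakDunfordPettis {E F : Type*} [NormedAddCommGroup E] [NormedSpace ℝ E]
    [NormedAddCommGroup F] [NormedSpace ℝ F] (T : E →L[ℝ] F) : Prop :=
  ∀ x : ℕ → E, WeaklyNullSeq x →
    ∀ f : ℕ → (F →L[ℝ] ℝ),
      (∀ G : (F →L[ℝ] ℝ) →L[ℝ] ℝ, Tendsto (fun n => G (f n)) atTop (𝓝 0)) →
      Tendsto (fun n => f n (T (x n))) atTop (𝓝 0)

/-- Dedekind complete lattice. -/
def DedekindComplete (E : Type*) [Lattice E] : Prop :=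
  ∀ s : Set E, s.Nonempty → BddAbove s → ∃ a, IsLUB s a

/-- Dedekind σ-complete lattice. -/
def DedekindSigmaComplete (E : Type*) [Lattice E] : Prop :=
  ∀ s : Set E, s.Countable → s.Nonempty → BddAbove s → ∃ a, IsLUB s a

/-
An additive map `T` that preserves `⊔` preserves `⊓` and `|·|` as well, so
`T (|x n| ⊓ u) = |T (x n)| ⊓ T u`. Given `v ≥ 0` in `F`, surjectivity provides `u` with
`T u = v`, and then `u⁺ ≥ 0` still maps to `v`. Hence `f (|T (x n)| ⊓ v) = (f ∘ T) (|x n| ⊓ u⁺)`,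
which tends to `0` because `x` is uaw-null and `f ∘ T` is a continuous functional on `E`.
-/

section SupHom

variable {α β G : Type*} [Lattice α] [AddGroup α] [Lattice β] [AddGroup β]
  [FunLike G α β] [AddMonoidHomClass G α β]

theorem map_abs_of_map_sup (g : G) (hg : ∀ a b, g (a ⊔ b) = g a ⊔ g b) (a : α) :
    g |a| = |g a| := by
  rw [abs, hg, map_neg, abs]

variable [AddLeftMono α] [AddRightMono α] [AddLeftMono β] [AddRightMono β]

theorem map_inf_of_map_sup (g : G) (hg : ∀ a b, g (a ⊔ b) = g a ⊔ g b) (a b : α) :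
    g (a ⊓ b) = g a ⊓ g b := by
  rw [← neg_neg (a ⊓ b), neg_inf, map_neg, hg, map_neg, map_neg, neg_sup, neg_neg, neg_neg]

end SupHom

theorem surjective_latticeHom_sigma_uaw_continuous_general
    {E F : Type*} [NormedAddCommGroup E] [Lattice E] [IsOrderedAddMonoid E] [HasSolidNorm E] [NormedSpace ℝ E]
    [NormedAddCommGroup F] [Lattice F] [IsOrderedAddMonoid F] [HasSolidNorm F] [NormedSpace ℝ F]
    (T : E →L[ℝ] F) (hsurj : Function.Surjective T)
    (hhom : ∀ x y : E, T (x ⊔ y) = T x ⊔ T y) :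
    ∀ x : ℕ → E, (∃ C : ℝ, ∀ n, ‖x n‖ ≤ C) → UawNullSeq x →
      UawNullSeq fun n => T (x n) := by
  intro x _ hx v hv f
  obtain ⟨u, rfl⟩ := hsurj v
  have hTpos : T (u ⊔ 0) = T u := by rw [hhom, map_zero, sup_eq_left.mpr hv]
  have hcomp : ∀ n, f (|T (x n)| ⊓ T u) = (f.comp T) (|x n| ⊓ (u ⊔ 0)) := fun n => by
    rw [ContinuousLinearMap.comp_apply, map_inf_of_map_sup T hhom, map_abs_of_map_sup T hhom,
      hTpos]
  simpa only [hcomp] using hx (u ⊔ 0) le_sup_right (f.comp T)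

/-- a surjective continuous lattice homomorphism is σ-uaw-continuous. -/
theorem surjective_latticeHom_sigma_uaw_continuous
    {E F : Type*} [NormedAddCommGroup E] [Lattice E] [IsOrderedAddMonoid E] [HasSolidNorm E] [NormedSpace ℝ E] [CompleteSpace E]
    [NormedAddCommGroup F] [Lattice F] [IsOrderedAddMonoid F] [HasSolidNorm F] [NormedSpace ℝ F] [CompleteSpace F]
    (T : E →L[ℝ] F) (hsurj : Function.Surjective T)
    (hhom : ∀ x y : E, T (x ⊔ y) = T x ⊔ T y) :
    ∀ x : ℕ → E, (∃ C : ℝ, ∀ n, ‖x n‖ ≤ C) → UawNullSeq x →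
      UawNullSeq fun n => T (x n) :=
  surjective_latticeHom_sigma_uaw_continuous_general T hsurj hhom
end

section
/- Let E, F, G be Banach lattices, let T : F → G be a σ-unbounded Dunford-Pettis operator, and let S : E → F be a sequentially un-compact operator. Then the composition T ∘ S : E → G is a sequentially un-compact operator. -/
open Filter Topology

/-- the composition of a σ-uDP operator with a sequentially un-compact
operator is sequentially un-compact. -/
theorem sigmaUDP_comp_seqUnCompact
    {E F G : Type*} [NormedAddCommGroup E] [Lattice E] [IsOrderedAddMonoid E] [HasSolidNorm E] [NormedSpace ℝ E] [CompleteSpace E]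
    [NormedAddCommGroup F] [Lattice F] [IsOrderedAddMonoid F] [HasSolidNorm F] [NormedSpace ℝ F] [CompleteSpace F]
    [NormedAddCommGroup G] [Lattice G] [IsOrderedAddMonoid G] [HasSolidNorm G] [NormedSpace ℝ G] [CompleteSpace G]
    (T : F →L[ℝ] G) (hT : SigmaUDP T)
    (S : E →L[ℝ] F) (hS : SeqUnCompactOp S) :
    SeqUnCompactOp (T.comp S) := by
  intro y hy
  choose x hx hTx using hy
  obtain ⟨z, φ, hφ, hconv⟩ := hS (fun n => S (x n)) (fun n => ⟨x n, hx n, rfl⟩)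
  set w : ℕ → F := fun k => S (x (φ k)) - z with hw
  have hbound : ∃ C : ℝ, ∀ k, ‖w k‖ ≤ C := by
    refine ⟨‖S‖ + ‖z‖, fun k => ?_⟩
    have h1 : ‖S (x (φ k))‖ ≤ ‖S‖ * 1 := by
      have := S.le_opNorm (x (φ k))
      have hb : ‖x (φ k)‖ ≤ 1 := by
        simpa [Metric.mem_closedBall, dist_zero_right] using hx (φ k)
      calc ‖S (x (φ k))‖ ≤ ‖S‖ * ‖x (φ k)‖ := this
        _ ≤ ‖S‖ * 1 := by
          exact mul_le_mul_of_nonneg_left hb (norm_nonneg S)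
    calc ‖w k‖ ≤ ‖S (x (φ k))‖ + ‖z‖ := norm_sub_le _ _
      _ ≤ ‖S‖ + ‖z‖ := by linarith
  have huaw : UawNullSeq w := by
    intro u hu f
    have hn : Tendsto (fun k => ‖|w k| ⊓ u‖) atTop (𝓝 0) := hconv u hu
    have : Tendsto (fun k => |w k| ⊓ u) atTop (𝓝 0) := by
      rw [tendsto_zero_iff_norm_tendsto_zero]; exact hn
    have := (f.continuous.tendsto 0).comp this
    simpa [Function.comp_def] using this
  have hun : UnNullSeq fun k => T (w k) := hT w hbound huaw
  refine ⟨T z, φ, hφ, fun v hv => ?_⟩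
  have : ∀ k, y (φ k) - T z = T (w k) := by
    intro k
    rw [← hTx (φ k)]
    simp [hw, map_sub]
  simpa [this] using hun v hv
end

section
/- Let E and F be Banach lattices. If every weak Dunford-Pettis operator T : E → F is a σ-unbounded Dunford-Pettis operator, then at least one of the following holds: (1) the norm dual E' has order continuous norm; (2) F has order continuous norm. -/
open Filter Topology

/-! If `E'` fails to have order continuous norm, the classical disjointification argument
(Dodds–Fremlin) produces a norm bounded disjoint sequence `(y n)` in `E` and a positive
functional `g` with `g (y n)` bounded away from `0`. Disjoint sequences are uaw-null, and the rank
one operator `x ↦ g x • e` is weak Dunford–Pettis for every `e`; if `F ≠ 0`, choosing `e > 0`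
makes `|T (y n)| ⊓ e` stay above a fixed multiple of `e`, so `T` is not σ-uDP. -/

open Finset

section LatticeOrderedGroup

variable {α : Type*} [AddCommGroup α] [Lattice α] [IsOrderedAddMonoid α]

lemma add_inf_eq_zero {a b c : α} (hac : a ⊓ c = 0) (hbc : b ⊓ c = 0) : (a + b) ⊓ c = 0 := by
  have ha : 0 ≤ a := hac ▸ inf_le_left
  have hb : 0 ≤ b := hbc ▸ inf_le_left
  have hc : 0 ≤ c := hac ▸ inf_le_right
  have hle_a : (a + b) ⊓ c ≤ a :=
    calc (a + b) ⊓ c ≤ (a + b) ⊓ (a + c) := inf_le_inf_left _ (le_add_of_nonneg_left ha)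
      _ = a := by rw [← add_inf, hbc, add_zero]
  exact le_antisymm (hac ▸ le_inf hle_a inf_le_right) (le_inf (add_nonneg ha hb) hc)

lemma Finset.sum_inf_eq_zero {ι : Type*} {f : ι → α} {c : α} (hc : 0 ≤ c) (s : Finset ι)
    (hf : ∀ i ∈ s, f i ⊓ c = 0) : (∑ i ∈ s, f i) ⊓ c = 0 := by
  induction s using Finset.cons_induction with
  | empty => simpa using hc
  | cons a s ha ih =>
    rw [sum_cons]
    exact add_inf_eq_zero (hf a (mem_cons_self a s)) (ih fun i hi => hf i (mem_cons_of_mem hi))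

/-- Pairwise disjoint positive elements add up to their supremum. -/
lemma Finset.sum_le_of_pairwise_inf_eq_zero {ι : Type*} {f : ι → α} {u : α} (hu : 0 ≤ u)
    (hf : ∀ i, 0 ≤ f i) (hfu : ∀ i, f i ≤ u) (hd : Pairwise fun i j => f i ⊓ f j = 0)
    (s : Finset ι) : ∑ i ∈ s, f i ≤ u := by
  induction s using Finset.cons_induction with
  | empty => simpa using hu
  | cons a s ha ih =>
    have hdisj : f a ⊓ ∑ i ∈ s, f i = 0 := by
      rw [inf_comm]
      exact Finset.sum_inf_eq_zero (hf a) s fun i hi => hd (ne_of_mem_of_not_mem hi ha)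
    have hsum : f a + ∑ i ∈ s, f i = f a ⊔ ∑ i ∈ s, f i := by
      rw [← inf_add_sup, hdisj, zero_add]
    rw [sum_cons, hsum]
    exact sup_le (hfu a) ih

lemma inv_two_pow_smul_nonneg [Module ℝ α] {x : α} (hx : 0 ≤ x) (k : ℕ) :
    0 ≤ ((2 : ℝ)⁻¹ ^ k) • x := by
  induction k with
  | zero => simpa using hx
  | succ k ih =>
    refine nsmul_two_semiclosed ?_
    convert ih using 1
    rw [two_nsmul, ← add_smul]
    ring_nf

end LatticeOrderedGroup

lemma ContinuousLinearMap.monotone_of_apply_nonneg {E : Type*} [AddCommGroup E] [PartialOrder E]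
    [IsOrderedAddMonoid E] [Module ℝ E] [TopologicalSpace E] {φ : E →L[ℝ] ℝ}
    (hφ : ∀ x, 0 ≤ x → 0 ≤ φ x) : Monotone φ := fun u v huv => by
  simpa using hφ _ (sub_nonneg.2 huv)

section RieszSpace

variable {E : Type*} [AddCommGroup E] [Lattice E] [Module ℝ E]

/-- The weight `4 ^ n` cuts `x n` off the earlier terms and `2⁻¹ ^ n • u` off the later ones. -/
noncomputable def disjointSeq (x : ℕ → E) (u : E) (n : ℕ) : E :=
  (x n - (4 : ℝ) ^ n • ∑ k ∈ range n, x k - (2 : ℝ)⁻¹ ^ n • u)⁺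

lemma disjointSeq_nonneg (x : ℕ → E) (u : E) (n : ℕ) : 0 ≤ disjointSeq x u n :=
  posPart_nonneg _

variable [IsOrderedAddMonoid E]

lemma apply_disjointSeq_ge [TopologicalSpace E] {φ : E →L[ℝ] ℝ} (hφ : ∀ x, 0 ≤ x → 0 ≤ φ x)
    (x : ℕ → E) (u : E) (n : ℕ) :
    φ (x n) - 4 ^ n * φ (∑ k ∈ range n, x k) - 2⁻¹ ^ n * φ u ≤ φ (disjointSeq x u n) := by
  simpa [disjointSeq] using φ.monotone_of_apply_nonneg hφ (le_posPart _ : _ ≤ disjointSeq x u n)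

variable [IsOrderedModule ℝ E]

lemma posPart_sub_smul_inf_posPart_sub_smul_eq_zero {a b : E} (hb : 0 ≤ b) {s t : ℝ}
    (ht : 0 < t) (hst : 1 ≤ s * t) : (a - s • b)⁺ ⊓ (b - t • a)⁺ = 0 := by
  set c := (a - s • b)⁺ ⊓ (b - t • a)⁺
  have hc : 0 ≤ c := le_inf (posPart_nonneg _) (posPart_nonneg _)
  have htc : t • c ≤ (t • a - b)⁺ :=
    calc t • c ≤ t • (a - s • b)⁺ := smul_le_smul_of_nonneg_left inf_le_left ht.le
      _ = (t • a - (s * t) • b)⁺ := by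
        have := (OrderIso.smulRight ht).map_sup (a - s • b) 0
        simp only [OrderIso.smulRight_apply, smul_zero] at this
        rw [posPart_def, posPart_def, this, smul_sub, smul_smul, mul_comm]
      _ ≤ (t • a - b)⁺ := posPart_mono <| sub_le_sub_left (by
          simpa using smul_le_smul_of_nonneg_right hst hb) _
  have hc' : c ≤ (t • a - b)⁻ := by
    rw [negPart_def, neg_sub]
    exact inf_le_right
  set r := min t 1
  have hr : 0 < r := lt_min ht one_pos
  have hrc : r • c ≤ (t • a - b)⁺ ⊓ (t • a - b)⁻ :=
    le_inf ((smul_le_smul_of_nonneg_right (min_le_left t 1) hc).trans htc)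
      ((smul_le_smul_of_nonneg_right (min_le_right t 1) hc).trans (by simpa using hc'))
  rw [posPart_inf_negPart_eq_zero] at hrc
  have hrc0 : r • c = 0 := le_antisymm hrc (smul_nonneg hr.le hc)
  exact (smul_eq_zero.1 hrc0).resolve_left hr.ne'

lemma disjointSeq_le {x : ℕ → E} (hx : ∀ n, 0 ≤ x n) {u : E} (hu : 0 ≤ u) (n : ℕ) :
    disjointSeq x u n ≤ x n := by
  refine sup_le ?_ (hx n)
  exact (sub_le_self _ (smul_nonneg (by positivity) hu)).trans
    (sub_le_self _ (smul_nonneg (by positivity) (sum_nonneg fun k _ => hx k)))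

lemma disjointSeq_inf_eq_zero {x : ℕ → E} (hx : ∀ n, 0 ≤ x n) {u : E} (hu : 0 ≤ u)
    (hxu : ∀ k, (2 : ℝ)⁻¹ ^ k • x k ≤ u) {m n : ℕ} (hmn : m < n) :
    disjointSeq x u m ⊓ disjointSeq x u n = 0 := by
  have hm : disjointSeq x u m ≤ (x m - ((2 : ℝ)⁻¹ ^ m * (2 : ℝ)⁻¹ ^ n) • x n)⁺ := by
    refine posPart_mono ((sub_le_sub_right (sub_le_self _ ?_) _).trans (sub_le_sub_left ?_ _))
    · exact smul_nonneg (by positivity) (sum_nonneg fun k _ => hx k)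
    · rw [mul_smul]
      exact smul_le_smul_of_nonneg_left (hxu n) (by positivity)
  have hn : disjointSeq x u n ≤ (x n - (4 : ℝ) ^ n • x m)⁺ := by
    refine posPart_mono ((sub_le_self _ (smul_nonneg (by positivity) hu)).trans
      (sub_le_sub_left (smul_le_smul_of_nonneg_left ?_ (by positivity)) _))
    exact single_le_sum (fun k _ => hx k) (mem_range.2 hmn)
  have hst : 1 ≤ (2 : ℝ)⁻¹ ^ m * (2 : ℝ)⁻¹ ^ n * 4 ^ n :=
    calc (1 : ℝ) = (2 : ℝ)⁻¹ ^ n * (2 : ℝ)⁻¹ ^ n * 4 ^ n := by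
          rw [← mul_pow, ← mul_pow]; norm_num
      _ ≤ (2 : ℝ)⁻¹ ^ m * (2 : ℝ)⁻¹ ^ n * 4 ^ n := by
          gcongr ?_ * _ * _
          exact pow_le_pow_of_le_one (by norm_num) (by norm_num) hmn.le
  refine le_antisymm ((inf_le_inf hm hn).trans ?_) (le_inf (posPart_nonneg _) (posPart_nonneg _))
  exact (posPart_sub_smul_inf_posPart_sub_smul_eq_zero (hx n) (by positivity) hst).le

end RieszSpace

section NormedLattice

variable {E : Type*} [NormedAddCommGroup E] [Lattice E] [IsOrderedAddMonoid E] [HasSolidNorm E]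

lemma norm_le_norm_of_nonneg_of_le {a b : E} (ha : 0 ≤ a) (hab : a ≤ b) : ‖a‖ ≤ ‖b‖ :=
  HasSolidNorm.solid <| by rwa [abs_of_nonneg ha, abs_of_nonneg (ha.trans hab)]

variable [NormedSpace ℝ E]

/-- The positive cone is closed and contains the dyadic multiples of its elements, so a normed
lattice is automatically an ordered real vector space. -/
lemma smul_nonneg_of_hasSolidNorm {c : ℝ} (hc : 0 ≤ c) {x : E} (hx : 0 ≤ x) : 0 ≤ c • x := by
  have hdyadic : ∀ k : ℕ, 0 ≤ ((⌈c * 2 ^ k⌉₊ : ℝ) / 2 ^ k) • x := fun k => by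
    rw [div_eq_mul_inv, ← inv_pow, mul_smul, Nat.cast_smul_eq_nsmul]
    exact nsmul_nonneg (inv_two_pow_smul_nonneg hx k) _
  have hlim : Tendsto (fun k : ℕ => (⌈c * 2 ^ k⌉₊ : ℝ) / 2 ^ k) atTop (𝓝 c) :=
    (tendsto_nat_ceil_mul_div_atTop hc).comp (tendsto_pow_atTop_atTop_of_one_lt one_lt_two)
  exact ge_of_tendsto' (hlim.smul_const x) hdyadic

instance HasSolidNorm.isOrderedModule : IsOrderedModule ℝ E :=
  .of_smul_nonneg fun _ hc _ hx => smul_nonneg_of_hasSolidNorm hc hx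

/-- The partial sums, taken separately over the terms on which `φ` is positive and on which it is
negative, stay in `[0, u]`. -/
lemma tendsto_apply_of_pairwise_inf_eq_zero {z : ℕ → E} {u : E} (hu : 0 ≤ u) (hz : ∀ n, 0 ≤ z n)
    (hzu : ∀ n, z n ≤ u) (hd : Pairwise fun m n => z m ⊓ z n = 0) (φ : E →L[ℝ] ℝ) :
    Tendsto (fun n => φ (z n)) atTop (𝓝 0) := by
  classical
  have hbound : ∀ s : Finset ℕ, |φ (∑ k ∈ s, z k)| ≤ ‖φ‖ * ‖u‖ := fun s =>
    φ.le_opNorm_of_le <| norm_le_norm_of_nonneg_of_le (sum_nonneg fun k _ => hz k)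
      (Finset.sum_le_of_pairwise_inf_eq_zero hu hz hzu hd s)
  have hsum : Summable fun n => |φ (z n)| := by
    refine summable_of_sum_range_le (c := 2 * (‖φ‖ * ‖u‖)) (fun n => abs_nonneg _) fun n => ?_
    set A := (range n).filter fun k => 0 ≤ φ (z k)
    set B := (range n).filter fun k => ¬0 ≤ φ (z k)
    have hA : ∑ k ∈ A, |φ (z k)| = φ (∑ k ∈ A, z k) := by
      rw [map_sum]
      exact sum_congr rfl fun k hk => abs_of_nonneg (mem_filter.1 hk).2
    have hB : ∑ k ∈ B, |φ (z k)| = -φ (∑ k ∈ B, z k) := by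
      rw [map_sum, ← sum_neg_distrib]
      exact sum_congr rfl fun k hk => abs_of_neg (not_le.1 (mem_filter.1 hk).2)
    rw [← sum_filter_add_sum_filter_not (range n) (fun k => 0 ≤ φ (z k)), hA, hB]
    linarith [le_abs_self (φ (∑ k ∈ A, z k)), neg_le_abs (φ (∑ k ∈ B, z k)), hbound A, hbound B]
  simpa using (tendsto_zero_iff_abs_tendsto_zero _).2 hsum.tendsto_atTop_zero

lemma uawNullSeq_of_pairwise_abs_inf_eq_zero {x : ℕ → E}
    (hd : Pairwise fun m n => |x m| ⊓ |x n| = 0) : UawNullSeq x := by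
  intro u hu φ
  have hz : ∀ n, 0 ≤ |x n| ⊓ u := fun n => le_inf (abs_nonneg _) hu
  refine tendsto_apply_of_pairwise_inf_eq_zero hu hz (fun n => inf_le_right)
    (fun m n hmn => le_antisymm ?_ (le_inf (hz m) (hz n))) φ
  exact (inf_le_inf inf_le_left inf_le_left).trans (hd hmn).le

lemma exists_nonneg_norm_le_one_lt_apply {φ : E →L[ℝ] ℝ} (hφ : ∀ x, 0 ≤ x → 0 ≤ φ x) {r : ℝ}
    (hr : r < ‖φ‖) : ∃ x, 0 ≤ x ∧ ‖x‖ ≤ 1 ∧ r < φ x := by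
  obtain ⟨x, hx1, hrx⟩ := φ.exists_lt_apply_of_lt_opNorm hr
  have hmono := φ.monotone_of_apply_nonneg hφ
  refine ⟨|x|, abs_nonneg x, by rw [norm_abs_eq_norm]; exact hx1.le, hrx.trans_le ?_⟩
  rw [Real.norm_eq_abs, abs_le']
  exact ⟨hmono (le_abs_self x), by simpa using hmono (neg_le_abs x)⟩

lemma exists_inv_two_pow_smul_le [CompleteSpace E] {x : ℕ → E} (hx : ∀ n, 0 ≤ x n)
    (hx1 : ∀ n, ‖x n‖ ≤ 1) : ∃ u : E, ∀ k, ((2 : ℝ)⁻¹ ^ k) • x k ≤ u := by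
  have hsum : Summable fun k => ((2 : ℝ)⁻¹ ^ k) • x k := by
    refine Summable.of_norm_bounded (summable_geometric_of_lt_one (by norm_num) two_inv_lt_one)
      fun k => ?_
    rw [norm_smul, norm_pow, norm_inv, Real.norm_two]
    exact mul_le_of_le_one_right (by positivity) (hx1 k)
  exact ⟨_, fun k => hsum.le_tsum k fun j _ => inv_two_pow_smul_nonneg (hx j) j⟩

theorem exists_disjoint_seq_le_apply [CompleteSpace E] {φ : ℕ → E →L[ℝ] ℝ}
    (hpos : ∀ n x, 0 ≤ x → 0 ≤ φ n x) (hdom : ∀ n x, 0 ≤ x → φ n x ≤ φ 0 x)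
    {x : ℕ → E} (hx0 : ∀ n, 0 ≤ x n) (hx1 : ∀ n, ‖x n‖ ≤ 1) {ε : ℝ} (hε : 0 < ε)
    (hx : ∀ n, ε < φ n (x n)) (hσ : ∀ n, 4 ^ n * φ n (∑ k ∈ range n, x k) ≤ ε / 4) :
    ∃ y : ℕ → E, (∀ n, 0 ≤ y n) ∧ (∀ n, ‖y n‖ ≤ 1) ∧ Pairwise (fun m n => y m ⊓ y n = 0) ∧
      ∀ᶠ n in atTop, ε / 2 ≤ φ 0 (y n) := by
  obtain ⟨u, hxu⟩ := exists_inv_two_pow_smul_le hx0 hx1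
  have hu : 0 ≤ u := (hx0 0).trans (by simpa using hxu 0)
  refine ⟨disjointSeq x u, disjointSeq_nonneg x u, fun n => ?_, fun m n hmn => ?_, ?_⟩
  · exact (norm_le_norm_of_nonneg_of_le (disjointSeq_nonneg x u n) (disjointSeq_le hx0 hu n)).trans
      (hx1 n)
  · rcases hmn.lt_or_gt with h | h
    · exact disjointSeq_inf_eq_zero hx0 hu hxu h
    · rw [inf_comm]
      exact disjointSeq_inf_eq_zero hx0 hu hxu h
  · have hsmall : ∀ᶠ n in atTop, (2 : ℝ)⁻¹ ^ n * φ 0 u < ε / 4 :=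
      ((tendsto_pow_atTop_nhds_zero_of_lt_one (by norm_num) two_inv_lt_one).mul_const
        (φ 0 u)).eventually (gt_mem_nhds (by rw [zero_mul]; positivity))
    filter_upwards [hsmall] with n hn
    have hun : (2 : ℝ)⁻¹ ^ n * φ n u ≤ (2 : ℝ)⁻¹ ^ n * φ 0 u :=
      mul_le_mul_of_nonneg_left (hdom n u hu) (by positivity)
    linarith [apply_disjointSeq_ge (hpos n) x u n, hx n, hσ n,
      hdom n _ (disjointSeq_nonneg x u n)]

theorem exists_seq_of_frequently_lt_opNorm {ι : Type*} [Preorder ι] [Nonempty ι]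
    {f : ι → E →L[ℝ] ℝ} (hpos : ∀ i x, 0 ≤ x → 0 ≤ f i x)
    (hlim : ∀ v, Tendsto (fun i => f i v) atTop (𝓝 0)) {ε : ℝ} (hε : ∃ᶠ i in atTop, ε < ‖f i‖)
    {δ : ℕ → ℝ} (hδ : ∀ n, 0 < δ n) :
    ∃ (idx : ℕ → ι) (x : ℕ → E), Monotone idx ∧ (∀ n, 0 ≤ x n) ∧ (∀ n, ‖x n‖ ≤ 1) ∧
      (∀ n, ε < f (idx n) (x n)) ∧ ∀ n, f (idx n) (∑ k ∈ range n, x k) < δ n := by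
  have step : ∀ (n : ℕ) (i : ι) (σ : E),
      ∃ j x, i ≤ j ∧ f j σ < δ n ∧ 0 ≤ x ∧ ‖x‖ ≤ 1 ∧ ε < f j x := by
    intro n i σ
    obtain ⟨j, hεj, hij, hjσ⟩ := (hε.and_eventually ((eventually_ge_atTop i).and
      ((hlim σ).eventually (gt_mem_nhds (hδ n))))).exists
    obtain ⟨x, hx0, hx1, hx⟩ := exists_nonneg_norm_le_one_lt_apply (hpos j) hεj
    exact ⟨j, x, hij, hjσ, hx0, hx1, hx⟩
  choose next nextx hle hσ hx0 hx1 hx using step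
  obtain ⟨i₀⟩ := ‹Nonempty ι›
  -- `state n` holds the index chosen at step `n - 1` and the sum of the first `n` vectors
  let state : ℕ → ι × E := fun n =>
    Nat.rec (i₀, 0) (fun n p => (next n p.1 p.2, p.2 + nextx n p.1 p.2)) n
  have hstate : ∀ n, (state n).2 = ∑ k ∈ range n, nextx k (state k).1 (state k).2 := by
    intro n
    induction n with
    | zero => rfl
    | succ n ih => rw [sum_range_succ, ← ih]
  refine ⟨fun n => next n (state n).1 (state n).2, fun n => nextx n (state n).1 (state n).2,
    monotone_nat_of_le_succ fun n => hle _ _ _, fun n => hx0 _ _ _, fun n => hx1 _ _ _,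
    fun n => hx _ _ _, fun n => ?_⟩
  rw [← hstate]
  exact hσ _ _ _

theorem exists_disjoint_seq_of_not_tendsto_opNorm [CompleteSpace E] {ι : Type*} [Preorder ι]
    [Nonempty ι] {f : ι → E →L[ℝ] ℝ} (hpos : ∀ i x, 0 ≤ x → 0 ≤ f i x)
    (hanti : ∀ i j, i ≤ j → ∀ x, 0 ≤ x → f j x ≤ f i x)
    (hglb : ∀ x, 0 ≤ x → IsGLB (Set.range fun i => f i x) 0)
    (hnorm : ¬Tendsto (fun i => ‖f i‖) atTop (𝓝 0)) :
    ∃ (g : E →L[ℝ] ℝ) (c : ℝ) (y : ℕ → E), 0 < c ∧ (∀ n, 0 ≤ y n) ∧ (∀ n, ‖y n‖ ≤ 1) ∧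
      Pairwise (fun m n => y m ⊓ y n = 0) ∧ ∀ᶠ n in atTop, c ≤ g (y n) := by
  obtain ⟨ε, hε, hfreq⟩ : ∃ ε > 0, ∃ᶠ i in atTop, ε < ‖f i‖ := by
    obtain ⟨s, hs, hfreq⟩ := not_tendsto_iff_exists_frequently_notMem.1 hnorm
    obtain ⟨ε, hε, hball⟩ := Metric.mem_nhds_iff.1 hs
    refine ⟨ε / 2, half_pos hε, hfreq.mono fun i hi => ?_⟩
    by_contra! hle
    exact hi (hball (by rw [Metric.mem_ball, dist_zero_right, norm_norm]; linarith))
  have hlim : ∀ v, Tendsto (fun i => f i v) atTop (𝓝 0) := by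
    have hlim_nonneg : ∀ v, 0 ≤ v → Tendsto (fun i => f i v) atTop (𝓝 0) := fun v hv =>
      tendsto_atTop_isGLB (fun i j hij => hanti i j hij v hv) (hglb v hv)
    intro v
    have := (hlim_nonneg _ (posPart_nonneg v)).sub (hlim_nonneg _ (negPart_nonneg v))
    simpa only [← map_sub, posPart_sub_negPart, sub_zero] using this
  obtain ⟨idx, x, hidx, hx0, hx1, hx, hσ⟩ := exists_seq_of_frequently_lt_opNorm hpos hlim hfreq
    (δ := fun n => ε / (4 * 4 ^ n)) fun n => by positivity
  obtain ⟨y, hy0, hy1, hdisj, hy⟩ := exists_disjoint_seq_le_apply (φ := fun n => f (idx n))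
    (fun n => hpos (idx n)) (fun n => hanti _ _ (hidx (Nat.zero_le n))) hx0 hx1 hε hx fun n => by
      have := hσ n
      rw [lt_div_iff₀ (by positivity)] at this
      linarith
  exact ⟨f (idx 0), ε / 2, y, half_pos hε, hy0, hy1, hdisj, hy⟩

lemma not_unNullSeq_smul {e : E} (he : 0 ≤ e) (he0 : e ≠ 0) {a : ℕ → ℝ} {c : ℝ} (hc : 0 < c)
    (ha : ∀ᶠ n in atTop, c ≤ a n) : ¬UnNullSeq fun n => a n • e := by
  intro hun
  set r := min c 1
  have hr : 0 < r := lt_min hc one_pos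
  have hlow : ∀ᶠ n in atTop, ‖r • e‖ ≤ ‖|a n • e| ⊓ e‖ := ha.mono fun n hn => by
    rw [abs_of_nonneg (smul_nonneg (hc.le.trans hn) he)]
    refine norm_le_norm_of_nonneg_of_le (smul_nonneg hr.le he) (le_inf ?_ ?_)
    · exact smul_le_smul_of_nonneg_right ((min_le_left c 1).trans hn) he
    · simpa using smul_le_smul_of_nonneg_right (min_le_right c 1) he
  exact (norm_pos_iff.2 (smul_ne_zero hr.ne' he0)).not_ge (ge_of_tendsto (hun e he) hlow)

end NormedLattice

lemma weakDunfordPettis_smulRight {E F : Type*} [NormedAddCommGroup E] [NormedSpace ℝ E]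
    [NormedAddCommGroup F] [NormedSpace ℝ F] (g : E →L[ℝ] ℝ) (e : F) :
    WeakDunfordPettis (g.smulRight e) := by
  intro x hx f hf
  simpa using (hx g).mul (hf (ContinuousLinearMap.apply ℝ ℝ e))

theorem dual_or_range_orderContinuous_of_weakDP_sigmaUDP_general
    {E F : Type*} [NormedAddCommGroup E] [Lattice E] [IsOrderedAddMonoid E] [HasSolidNorm E] [NormedSpace ℝ E] [CompleteSpace E]
    [NormedAddCommGroup F] [Lattice F] [IsOrderedAddMonoid F] [HasSolidNorm F] [NormedSpace ℝ F]
    (h : ∀ T : E →L[ℝ] F, WeakDunfordPettis T → SigmaUDP T) :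
    DualOrderContinuousNorm E ∨ OrderContinuousNorm F := by
  by_cases hF : ∀ y : F, y = 0
  · exact Or.inr fun ι _ _ _ x _ _ => by simp [hF]
  obtain ⟨y₀, hy₀⟩ := not_forall.1 hF
  have hne : |y₀| ≠ 0 := norm_ne_zero_iff.1 (by rwa [norm_abs_eq_norm, norm_ne_zero_iff])
  refine Or.inl fun ι _ _ _ f hpos hanti hglb => by_contra fun hnorm => ?_
  obtain ⟨g, c, y, hc, hy0, hy1, hdisj, hgy⟩ :=
    exists_disjoint_seq_of_not_tendsto_opNorm hpos hanti hglb hnorm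
  have huaw : UawNullSeq y := uawNullSeq_of_pairwise_abs_inf_eq_zero <| by
    simpa only [abs_of_nonneg (hy0 _)] using hdisj
  have hun := h _ (weakDunfordPettis_smulRight g |y₀|) y ⟨1, hy1⟩ huaw
  simp only [ContinuousLinearMap.smulRight_apply] at hun
  exact not_unNullSeq_smul (abs_nonneg y₀) hne hc hgy hun

/-- if every weak Dunford-Pettis operator `E → F` is σ-uDP, then `E'` has
order continuous norm or `F` has order continuous norm. -/
theorem dual_or_range_orderContinuous_of_weakDP_sigmaUDP
    {E F : Type*} [NormedAddCommGroup E] [Lattice E] [IsOrderedAddMonoid E] [HasSolidNorm E] [NormedSpace ℝ E] [CompleteSpace E]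
    [NormedAddCommGroup F] [Lattice F] [IsOrderedAddMonoid F] [HasSolidNorm F] [NormedSpace ℝ F] [CompleteSpace F]
    (h : ∀ T : E →L[ℝ] F, WeakDunfordPettis T → SigmaUDP T) :
    DualOrderContinuousNorm E ∨ OrderContinuousNorm F :=
  dual_or_range_orderContinuous_of_weakDP_sigmaUDP_general h
end
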